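/- arXiv:math/0605073 — 4 statements merged into one kernel-verified Lean document; each statement's English description precedes it below -/
import Mathlib

section
/- Let K be a field of characteristic p > 0, A a commutative K-algebra, δ a K-derivation of A with δ^p = 0, and a ∈ A. Then (a·δ)^p = (a·δ)^{p−1}(a) · δ (a special case of Hochschild's formula). -/
open Finset MvPolynomial

section General

variable {R A : Type*} [CommSemiring R] [CommRing A] [Algebra R A]

/-- Coefficients in the expansion of `(a•d)^n` as `∑ i, hcoef d a n i • d^i`. -/
noncomputable def hcoef (d : Derivation R A A) (a : A) : ℕ → ℕ → A
  | 0, i => if i = 0 then 1 else 0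
  | n+1, 0 => a * d (hcoef d a n 0)
  | n+1, i+1 => a * d (hcoef d a n (i+1)) + a * hcoef d a n i

theorem hcoef_of_lt (d : Derivation R A A) (a : A) : ∀ n i, n < i → hcoef d a n i = 0 := by
  intro n
  induction n with
  | zero => intro i hi; simp [hcoef]; omega
  | succ n ih =>
    intro i hi
    match i, hi with
    | i+1, hi => simp [hcoef, ih i (by omega), ih (i+1) (by omega)]

theorem hcoef_nzero (d : Derivation R A A) (a : A) : ∀ n, 1 ≤ n → hcoef d a n 0 = 0 := by
  intro n
  induction n with
  | zero => omega
  | succ n ih =>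
    intro _
    rcases Nat.eq_zero_or_pos n with h | h
    · subst h; simp [hcoef]
    · simp [hcoef, ih h]

theorem hcoef_one (d : Derivation R A A) (a : A) (n : ℕ) :
    hcoef d a (n+1) 1 = (((a • d : Derivation R A A).toLinearMap : Module.End R A) ^ n) a := by
  induction n with
  | zero => simp [hcoef]
  | succ n ih =>
    rw [show hcoef d a (n+1+1) 1
        = a * d (hcoef d a (n+1) 1) + a * hcoef d a (n+1) 0 from rfl,
      hcoef_nzero d a (n+1) (by omega), mul_zero, add_zero, ih, pow_succ',
      Module.End.mul_apply]
    simp [Derivation.smul_apply, smul_eq_mul]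

theorem smul_comp_aux (d : Derivation R A A) (a c : A) (i : ℕ) :
    ((a • d : Derivation R A A).toLinearMap : Module.End R A) * (c • (d.toLinearMap ^ i)) =
      (a * d c) • (d.toLinearMap ^ i) + (a * c) • (d.toLinearMap ^ (i+1)) := by
  ext x
  simp only [Module.End.mul_apply, LinearMap.add_apply, LinearMap.smul_apply, smul_eq_mul,
    pow_succ', Module.End.mul_apply, Derivation.coeFn_coe, Derivation.smul_apply,
    Derivation.leibniz]
  ring

theorem expand (d : Derivation R A A) (a : A) (n : ℕ) :
    ((a • d : Derivation R A A).toLinearMap : Module.End R A) ^ n =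
      ∑ i ∈ range (n+1), hcoef d a n i • (d.toLinearMap ^ i : Module.End R A) := by
  induction n with
  | zero => simp [hcoef]
  | succ n ih =>
    rw [pow_succ', ih, Finset.mul_sum]
    have h1 : ∀ i ∈ range (n+1),
        ((a • d : Derivation R A A).toLinearMap : Module.End R A) * (hcoef d a n i • (d.toLinearMap ^ i))
        = (a * d (hcoef d a n i)) • (d.toLinearMap ^ i : Module.End R A)
          + (a * hcoef d a n i) • (d.toLinearMap ^ (i+1) : Module.End R A) := by
      intro i _; exact smul_comp_aux d a _ i
    rw [Finset.sum_congr rfl h1, Finset.sum_add_distrib]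
    rw [Finset.sum_range_succ' (fun i => hcoef d a (n+1) i • (d.toLinearMap ^ i : Module.End R A)) (n+1)]
    have h2 : ∀ i ∈ range (n+1),
        hcoef d a (n+1) (i+1) • (d.toLinearMap ^ (i+1) : Module.End R A)
        = (a * d (hcoef d a n (i+1))) • (d.toLinearMap ^ (i+1) : Module.End R A)
          + (a * hcoef d a n i) • (d.toLinearMap ^ (i+1) : Module.End R A) := by
      intro i _
      rw [show hcoef d a (n+1) (i+1) = a * d (hcoef d a n (i+1)) + a * hcoef d a n i from rfl,
        add_smul]
    rw [Finset.sum_congr rfl h2, Finset.sum_add_distrib]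
    have h3 : (∑ i ∈ range (n+1), (a * d (hcoef d a n i)) • (d.toLinearMap ^ i : Module.End R A))
        = (∑ i ∈ range (n+1), (a * d (hcoef d a n (i+1))) • (d.toLinearMap ^ (i+1) : Module.End R A))
          + hcoef d a (n+1) 0 • (d.toLinearMap ^ 0 : Module.End R A) := by
      rw [Finset.sum_range_succ' (fun i => (a * d (hcoef d a n i)) • (d.toLinearMap ^ i : Module.End R A)) n]
      rw [Finset.sum_range_succ (fun i => (a * d (hcoef d a n (i+1))) • (d.toLinearMap ^ (i+1) : Module.End R A)) n]
      rw [hcoef_of_lt d a n (n+1) (by omega)]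
      simp [hcoef]
    rw [h3]
    abel

theorem pow_succ_apply' (d : Derivation R A A) (m : ℕ) (z : A) :
    (d.toLinearMap ^ (m+1)) z = d.toLinearMap ((d.toLinearMap ^ m) z) := by
  rw [pow_succ', Module.End.mul_apply]

theorem iter_leibniz (d : Derivation R A A) (n : ℕ) (x y : A) :
    (d.toLinearMap ^ n) (x * y) =
      ∑ k ∈ range (n+1), n.choose k • ((d.toLinearMap ^ (n-k)) x * (d.toLinearMap ^ k) y) := by
  induction n with
  | zero => simp
  | succ n IH =>
    calc
      (d.toLinearMap ^ (n+1)) (x * y)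
          = d.toLinearMap (∑ k ∈ range (n+1),
              n.choose k • ((d.toLinearMap ^ (n-k)) x * (d.toLinearMap ^ k) y)) := by
        rw [pow_succ_apply', IH]
      _ = (∑ k ∈ range (n+1),
            n.choose k • ((d.toLinearMap ^ (n-k+1)) x * (d.toLinearMap ^ k) y)) +
          ∑ k ∈ range (n+1),
            n.choose k • ((d.toLinearMap ^ (n-k)) x * (d.toLinearMap ^ (k+1)) y) := by
        rw [map_sum, ← sum_add_distrib]
        refine sum_congr rfl fun k hk => ?_
        rw [map_nsmul, ← smul_add]
        congr 1
        rw [pow_succ_apply', pow_succ_apply']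
        simp only [Derivation.coeFn_coe, Derivation.leibniz, smul_eq_mul]
        ring
      _ = (∑ k ∈ range (n+1),
                n.choose (k+1) • ((d.toLinearMap ^ (n-k)) x * (d.toLinearMap ^ (k+1)) y)) +
              1 • ((d.toLinearMap ^ (n+1)) x * (d.toLinearMap ^ 0) y) +
            ∑ k ∈ range (n+1),
              n.choose k • ((d.toLinearMap ^ (n-k)) x * (d.toLinearMap ^ (k+1)) y) := ?_
      _ = ((∑ k ∈ range (n+1), n.choose (k+1) • ((d.toLinearMap ^ (n-k)) x * (d.toLinearMap ^ (k+1)) y)) +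
              ∑ k ∈ range (n+1),
                n.choose k • ((d.toLinearMap ^ (n-k)) x * (d.toLinearMap ^ (k+1)) y)) +
            1 • ((d.toLinearMap ^ (n+1)) x * (d.toLinearMap ^ 0) y) := by
        abel
      _ = (∑ i ∈ range (n+1),
              (n+1).choose (i+1) • ((d.toLinearMap ^ (n+1-(i+1))) x * (d.toLinearMap ^ (i+1)) y)) +
            1 • ((d.toLinearMap ^ (n+1)) x * (d.toLinearMap ^ 0) y) := by
        simp_rw [Nat.choose_succ_succ, Nat.succ_sub_succ, add_smul, sum_add_distrib]
        abel
      _ = ∑ k ∈ range (n+2),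
            (n+1).choose k • ((d.toLinearMap ^ (n+1-k)) x * (d.toLinearMap ^ k) y) := by
        rw [sum_range_succ' _ (n+1), Nat.choose_zero_right, tsub_zero, one_smul]
    congr
    refine (sum_range_succ' _ _).trans (congr_arg₂ (· + ·) ?_ ?_)
    · rw [sum_range_succ, Nat.choose_succ_self, zero_smul, add_zero]
      refine sum_congr rfl fun k hk => ?_
      rw [mem_range] at hk
      have : n - (k + 1) + 1 = n - k := by omega
      rw [this]
    · rw [Nat.choose_zero_right, tsub_zero]

theorem pow_prime_leibniz (d : Derivation R A A) (p : ℕ) (hp : p.Prime)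
    (hA : ∀ z : A, p • z = 0) (x y : A) :
    (d.toLinearMap ^ p) (x * y) =
      x * (d.toLinearMap ^ p) y + (d.toLinearMap ^ p) x * y := by
  have hp2 := hp.two_le
  rw [iter_leibniz]
  rw [show p + 1 = p - 1 + 1 + 1 by omega, sum_range_succ, sum_range_succ']
  have h1 : p - 1 + 1 = p := by omega
  have hmid : ∑ k ∈ range (p - 1),
      p.choose (k+1) • ((d.toLinearMap ^ (p-(k+1))) x * (d.toLinearMap ^ (k+1)) y) = 0 := by
    refine sum_eq_zero fun k hk => ?_
    rw [mem_range] at hk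
    obtain ⟨m, hm⟩ := hp.dvd_choose_self (by omega) (by omega : k + 1 < p)
    rw [hm, mul_comm, mul_smul, hA, smul_zero]
  rw [h1, hmid, zero_add, Nat.choose_zero_right, Nat.choose_self, tsub_zero, tsub_self,
    one_smul, one_smul, pow_zero, Module.End.one_apply, Module.End.one_apply]
  ring

end General

section Universal

variable (p : ℕ) [Fact p.Prime]

/-- The universal shift derivation on `𝔽_p[x₀, x₁, …]`, `xᵢ ↦ xᵢ₊₁`. -/
noncomputable def shiftD :
    Derivation (ZMod p) (MvPolynomial ℕ (ZMod p)) (MvPolynomial ℕ (ZMod p)) :=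
  MvPolynomial.mkDerivation _ (fun i => X (i+1))

theorem shiftD_X (i : ℕ) : shiftD p (X i) = X (i+1) :=
  MvPolynomial.mkDerivation_X _ _ _

theorem shiftD_pow_X (i k : ℕ) :
    ((shiftD p).toLinearMap ^ i) (X k) = X (k + i) := by
  induction i generalizing k with
  | zero => simp
  | succ i ih =>
    rw [pow_succ, Module.End.mul_apply, Derivation.coeFn_coe, shiftD_X, ih, Nat.add_succ]
    congr 1
    omega

theorem shiftD_mem_supported {n : ℕ} {q : MvPolynomial ℕ (ZMod p)}
    (hq : q ∈ MvPolynomial.supported (ZMod p) (Set.Iic n)) :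
    shiftD p q ∈ MvPolynomial.supported (ZMod p) (Set.Iic (n+1)) := by
  rw [MvPolynomial.supported_eq_adjoin_X] at hq ⊢
  induction hq using Algebra.adjoin_induction with
  | mem x hx =>
    obtain ⟨i, hi, rfl⟩ := hx
    simp only [Set.mem_image, Set.mem_Iic] at hi ⊢
    rw [shiftD_X]
    exact Algebra.subset_adjoin ⟨i+1, by simpa using Nat.add_le_add_right hi 1, rfl⟩
  | algebraMap r => rw [Derivation.map_algebraMap]; exact Subalgebra.zero_mem _
  | add x y hx hy ihx ihy => rw [map_add]; exact Subalgebra.add_mem _ ihx ihy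
  | mul x y hx hy ihx ihy =>
    rw [Derivation.leibniz, smul_eq_mul, smul_eq_mul]
    have hx' : x ∈ Algebra.adjoin (ZMod p) (X '' Set.Iic (n+1) :
        Set (MvPolynomial ℕ (ZMod p))) :=
      Algebra.adjoin_mono (Set.image_mono (Set.Iic_subset_Iic.mpr (by omega))) hx
    have hy' : y ∈ Algebra.adjoin (ZMod p) (X '' Set.Iic (n+1) :
        Set (MvPolynomial ℕ (ZMod p))) :=
      Algebra.adjoin_mono (Set.image_mono (Set.Iic_subset_Iic.mpr (by omega))) hy
    exact Subalgebra.add_mem _ (Subalgebra.mul_mem _ hx' ihy) (Subalgebra.mul_mem _ hy' ihx)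

theorem aeval_fix {n : ℕ} (g : ℕ → MvPolynomial ℕ (ZMod p)) (hg : ∀ k ≤ n, g k = X k)
    {q : MvPolynomial ℕ (ZMod p)} (hq : q ∈ MvPolynomial.supported (ZMod p) (Set.Iic n)) :
    MvPolynomial.aeval g q = q := by
  rw [MvPolynomial.supported_eq_adjoin_X] at hq
  induction hq using Algebra.adjoin_induction with
  | mem x hx =>
    obtain ⟨i, hi, rfl⟩ := hx
    rw [Set.mem_Iic] at hi
    rw [MvPolynomial.aeval_X, hg i hi]
  | algebraMap r => simp
  | add x y hx hy ihx ihy => rw [map_add, ihx, ihy]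
  | mul x y hx hy ihx ihy => rw [map_mul, ihx, ihy]

theorem hcoef_supported (n i : ℕ) :
    hcoef (shiftD p) (X 0) n i ∈ MvPolynomial.supported (ZMod p) (Set.Iic n) := by
  induction n generalizing i with
  | zero =>
    rcases i with _ | i
    · rw [show hcoef (shiftD p) (X 0) 0 0 = 1 from rfl]; exact Subalgebra.one_mem _
    · rw [show hcoef (shiftD p) (X 0) 0 (i+1) = 0 from by simp [hcoef]]
      exact Subalgebra.zero_mem _
  | succ n ih =>
    have hX0 : (X 0 : MvPolynomial ℕ (ZMod p)) ∈
        MvPolynomial.supported (ZMod p) (Set.Iic (n+1)) :=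
      MvPolynomial.X_mem_supported.mpr (by simp)
    have hmono : MvPolynomial.supported (ZMod p) (Set.Iic n) ≤
        MvPolynomial.supported (ZMod p) (Set.Iic (n+1)) :=
      MvPolynomial.supported_mono (Set.Iic_subset_Iic.mpr (by omega))
    rcases i with _ | i
    · rw [show hcoef (shiftD p) (X 0) (n+1) 0
          = X 0 * shiftD p (hcoef (shiftD p) (X 0) n 0) from rfl]
      exact Subalgebra.mul_mem _ hX0 (shiftD_mem_supported p (ih 0))
    · rw [show hcoef (shiftD p) (X 0) (n+1) (i+1)
          = X 0 * shiftD p (hcoef (shiftD p) (X 0) n (i+1)) + X 0 * hcoef (shiftD p) (X 0) n i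
          from rfl]
      exact Subalgebra.add_mem _
        (Subalgebra.mul_mem _ hX0 (shiftD_mem_supported p (ih (i+1))))
        (Subalgebra.mul_mem _ hX0 (hmono (ih i)))

theorem hcoef_middle_zero (i₀ : ℕ) (h2 : 2 ≤ i₀) (hlt : i₀ < p) :
    hcoef (shiftD p) (X 0 : MvPolynomial ℕ (ZMod p)) p i₀ = 0 := by
  have hp : p.Prime := Fact.out
  have hp2 := hp.two_le
  have hp3 : 3 ≤ p := by omega
  have hA : ∀ z : MvPolynomial ℕ (ZMod p), p • z = 0 := fun z => by
    rw [← Nat.cast_smul_eq_nsmul (ZMod p), ZMod.natCast_self, zero_smul]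
  set B := MvPolynomial ℕ (ZMod p) with hB
  set d : Derivation (ZMod p) B B := shiftD p with hd
  set a : B := X 0 with ha
  set g : ℕ → B := fun k =>
    if k ≤ p then X k else if k = p + 2 then 1 else if k = 2*p + i₀ then 1 else 0 with hg
  set ψ : B →ₐ[ZMod p] B := MvPolynomial.aeval g with hψ
  have gm : g (p+1) = 0 := by
    have h1 : ¬ (p+1 ≤ p) := by omega
    have h2' : ¬ (p+1 = p+2) := by omega
    have h3 : ¬ (p+1 = 2*p + i₀) := by omega
    simp only [hg, if_neg h1, if_neg h2', if_neg h3]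
  have gm' : g (2*p+1) = 0 := by
    have h1 : ¬ (2*p+1 ≤ p) := by omega
    have h2' : ¬ (2*p+1 = p+2) := by omega
    have h3 : ¬ (2*p+1 = 2*p + i₀) := by omega
    simp only [hg, if_neg h1, if_neg h2', if_neg h3]
  have gA : ∀ j, j ≤ p → g (p+1+j) = if j = 1 then 1 else 0 := by
    intro j hj
    by_cases hj1 : j = 1
    · subst hj1
      have h1 : ¬ (p+1+1 ≤ p) := by omega
      have h2' : p+1+1 = p+2 := by omega
      simp only [hg, if_neg h1, h2', if_pos rfl, if_pos]
    · have h1 : ¬ (p+1+j ≤ p) := by omega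
      have h2' : ¬ (p+1+j = p+2) := by omega
      have h3 : ¬ (p+1+j = 2*p + i₀) := by omega
      simp only [hg, if_neg h1, if_neg h2', if_neg h3, if_neg hj1]
  have gB : ∀ k, k ≤ p → g (2*p+1+k) = if k = i₀ - 1 then 1 else 0 := by
    intro k hk
    by_cases hk1 : k = i₀ - 1
    · subst hk1
      have h1 : ¬ (2*p+1+(i₀-1) ≤ p) := by omega
      have h2' : ¬ (2*p+1+(i₀-1) = p+2) := by omega
      have h3 : 2*p+1+(i₀-1) = 2*p + i₀ := by omega
      have hA1 : ¬ (2*p + i₀ ≤ p) := by omega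
      have hA2 : ¬ (2*p + i₀ = p + 2) := by omega
      simp only [hg, h3, if_neg hA1, if_neg hA2, if_pos rfl]
    · have h1 : ¬ (2*p+1+k ≤ p) := by omega
      have h2' : ¬ (2*p+1+k = p+2) := by omega
      have h3 : ¬ (2*p+1+k = 2*p + i₀) := by omega
      simp only [hg, if_neg h1, if_neg h2', if_neg h3, if_neg hk1]
  have key1 : ∀ z : B, (((a • d : Derivation (ZMod p) B B).toLinearMap : Module.End (ZMod p) B) ^ p) z
      = ∑ i ∈ range (p+1), hcoef d a p i * ((d.toLinearMap ^ i) z) := by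
    intro z
    rw [expand d a p, LinearMap.sum_apply]
    exact sum_congr rfl fun i _ => by rw [LinearMap.smul_apply, smul_eq_mul]
  have key2 := pow_prime_leibniz (a • d) p hp hA (X (p+1)) (X (2*p+1))
  have hψ2 : ψ ((((a • d : Derivation (ZMod p) B B).toLinearMap : Module.End (ZMod p) B) ^ p)
      (X (p+1) * X (2*p+1))) = 0 := by
    rw [key2, map_add, map_mul, map_mul]
    rw [show ψ (X (p+1)) = g (p+1) from MvPolynomial.aeval_X g (p+1)]
    rw [show ψ (X (2*p+1)) = g (2*p+1) from MvPolynomial.aeval_X g (2*p+1)]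
    rw [gm, gm', zero_mul, mul_zero, add_zero]
  have hfix : ∀ i, ψ (hcoef d a p i) = hcoef d a p i := by
    intro i
    exact aeval_fix p g (fun k hk => by simp only [hg, if_pos hk]) (hcoef_supported p p i)
  have hindic : ∀ i, i ≤ p → ψ ((d.toLinearMap ^ i) (X (p+1) * X (2*p+1)))
      = if i = i₀ then (i₀ : B) else 0 := by
    intro i hi
    rw [iter_leibniz d i (X (p+1)) (X (2*p+1)), map_sum]
    have hterm : ∀ k ∈ range (i+1),
        ψ (i.choose k • ((d.toLinearMap ^ (i-k)) (X (p+1)) * (d.toLinearMap ^ k) (X (2*p+1))))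
        = if i - k = 1 ∧ k = i₀ - 1 then (i.choose k : B) else 0 := by
      intro k hk
      rw [mem_range] at hk
      rw [hd, shiftD_pow_X, shiftD_pow_X, map_nsmul, map_mul]
      rw [show (MvPolynomial.aeval g) (X (p+1+(i-k))) = g (p+1+(i-k)) from
        MvPolynomial.aeval_X g _]
      rw [show (MvPolynomial.aeval g) (X (2*p+1+k)) = g (2*p+1+k) from
        MvPolynomial.aeval_X g _]
      rw [gA (i-k) (by omega), gB k (by omega)]
      by_cases hc1 : i - k = 1
      · by_cases hc2 : k = i₀ - 1
        · simp only [if_pos hc1, if_pos hc2, if_pos (And.intro hc1 hc2), mul_one,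
            nsmul_eq_mul, mul_one]
        · simp only [if_pos hc1, if_neg hc2, if_neg (by tauto : ¬ (i - k = 1 ∧ k = i₀ - 1)),
            mul_zero, smul_zero]
      · simp only [if_neg hc1, if_neg (by tauto : ¬ (i - k = 1 ∧ k = i₀ - 1)), zero_mul,
          smul_zero]
    rw [sum_congr rfl hterm]
    by_cases hii : i = i₀
    · rw [if_pos hii, hii]
      have hcongr : ∀ k ∈ range (i₀+1),
          (if i₀ - k = 1 ∧ k = i₀ - 1 then (i₀.choose k : B) else 0)
          = if k = i₀ - 1 then (i₀.choose k : B) else 0 := by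
        intro k hk
        rw [mem_range] at hk
        congr 1
        simp only [eq_iff_iff]
        omega
      rw [sum_congr rfl hcongr, Finset.sum_ite_eq' (range (i₀+1)) (i₀-1)
        (fun k => (i₀.choose k : B))]
      rw [if_pos (mem_range.mpr (by omega))]
      rw [Nat.choose_symm (by omega : 1 ≤ i₀), Nat.choose_one_right]
    · rw [if_neg hii]
      refine sum_eq_zero fun k hk => ?_
      rw [mem_range] at hk
      rw [if_neg (by omega : ¬ (i - k = 1 ∧ k = i₀ - 1))]
  have hψ1 : ψ ((((a • d : Derivation (ZMod p) B B).toLinearMap : Module.End (ZMod p) B) ^ p)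
      (X (p+1) * X (2*p+1))) = hcoef d a p i₀ * (i₀ : B) := by
    rw [key1, map_sum]
    have : ∀ i ∈ range (p+1),
        ψ (hcoef d a p i * ((d.toLinearMap ^ i) (X (p+1) * X (2*p+1))))
        = hcoef d a p i * (if i = i₀ then (i₀ : B) else 0) := by
      intro i hi
      rw [mem_range] at hi
      rw [map_mul, hfix i, hindic i (by omega)]
    rw [sum_congr rfl this]
    have : ∀ i ∈ range (p+1),
        hcoef d a p i * (if i = i₀ then (i₀ : B) else 0)
        = if i = i₀ then hcoef d a p i * (i₀ : B) else 0 := by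
      intro i _
      split_ifs <;> simp
    rw [sum_congr rfl this, Finset.sum_ite_eq' (range (p+1)) i₀ _,
      if_pos (mem_range.mpr (by omega))]
  have hzero : hcoef d a p i₀ * (i₀ : B) = 0 := by rw [← hψ1, hψ2]
  have hne : (i₀ : B) ≠ 0 := by
    intro h
    rw [CharP.cast_eq_zero_iff B p i₀] at h
    have := Nat.le_of_dvd (by omega) h
    omega
  rcases mul_eq_zero.mp hzero with h | h
  · exact h
  · exact absurd h hne

end Universal


section Transfer

variable {K A : Type*} [Field K] [CommRing A] [Algebra K A]
variable (p : ℕ) [Fact p.Prime] [CharP K p]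
variable (δ : Derivation K A A) (a : A)

/-- The transfer homomorphism from the universal model, `xⱼ ↦ δ^j a`. -/
noncomputable def transferHom : MvPolynomial ℕ (ZMod p) →+* A :=
  MvPolynomial.eval₂Hom ((algebraMap K A).comp (ZMod.castHom dvd_rfl K))
    (fun j => ((δ.toLinearMap : Module.End K A) ^ j) a)

theorem transferHom_X (k : ℕ) :
    transferHom p δ a (X k) = ((δ.toLinearMap : Module.End K A) ^ k) a :=
  MvPolynomial.eval₂Hom_X' _ _ _

theorem transferHom_comm (q : MvPolynomial ℕ (ZMod p)) :
    transferHom p δ a (shiftD p q) = δ (transferHom p δ a q) := by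
  induction q using MvPolynomial.induction_on with
  | C r =>
    rw [show (MvPolynomial.C r : MvPolynomial ℕ (ZMod p))
        = algebraMap (ZMod p) (MvPolynomial ℕ (ZMod p)) r from rfl,
      Derivation.map_algebraMap, map_zero]
    rw [show transferHom p δ a (algebraMap (ZMod p) (MvPolynomial ℕ (ZMod p)) r)
        = algebraMap K A (ZMod.castHom dvd_rfl K r) from by
      simp [transferHom, MvPolynomial.eval₂Hom_C]]
    rw [Derivation.map_algebraMap]
  | add q r ihq ihr => simp only [map_add, ihq, ihr]
  | mul_X q n ih =>
    rw [Derivation.leibniz, smul_eq_mul, smul_eq_mul, map_add, map_mul, map_mul,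
      shiftD_X, transferHom_X, transferHom_X, map_mul, transferHom_X, ih]
    rw [Derivation.leibniz, smul_eq_mul, smul_eq_mul, pow_succ_apply']
    simp only [Derivation.coeFn_coe]

theorem transferHom_hcoef : ∀ n i,
    transferHom p δ a (hcoef (shiftD p) (X 0) n i) = hcoef δ a n i := by
  intro n
  induction n with
  | zero =>
    intro i
    rcases i with _ | i
    · rw [show hcoef (shiftD p) (X 0 : MvPolynomial ℕ (ZMod p)) 0 0 = 1 from rfl, map_one]
      rfl
    · rw [show hcoef (shiftD p) (X 0 : MvPolynomial ℕ (ZMod p)) 0 (i+1) = 0 from by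
        simp [hcoef], map_zero]
      simp [hcoef]
  | succ n ih =>
    intro i
    have hX0 : transferHom p δ a (X 0) = a := by
      rw [transferHom_X, pow_zero, Module.End.one_apply]
    rcases i with _ | i
    · rw [show hcoef (shiftD p) (X 0 : MvPolynomial ℕ (ZMod p)) (n+1) 0
          = X 0 * shiftD p (hcoef (shiftD p) (X 0) n 0) from rfl,
        map_mul, hX0, transferHom_comm, ih]
      rfl
    · rw [show hcoef (shiftD p) (X 0 : MvPolynomial ℕ (ZMod p)) (n+1) (i+1)
          = X 0 * shiftD p (hcoef (shiftD p) (X 0) n (i+1))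
            + X 0 * hcoef (shiftD p) (X 0) n i from rfl,
        map_add, map_mul, map_mul, hX0, transferHom_comm, ih, ih]
      rfl

end Transfer

/-- Special case of Hochschild's formula: if `K` is a field of characteristic `p > 0`,
`A` a commutative `K`-algebra, `δ` a `K`-derivation of `A` with `δ^p = 0`, and `a ∈ A`,
then `(a·δ)^p = ((a·δ)^{p−1}(a)) · δ` (as `K`-linear endomorphisms of `A`). -/
theorem hochschild_special (K A : Type*) [Field K] [CommRing A] [Algebra K A]
    (p : ℕ) (hp : p.Prime) [CharP K p]
    (δ : Derivation K A A) (hδ : (δ.toLinearMap : Module.End K A) ^ p = 0) (a : A) :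
    ((a • δ : Derivation K A A).toLinearMap : Module.End K A) ^ p =
      ((((a • δ : Derivation K A A).toLinearMap : Module.End K A) ^ (p - 1)) a) •
        (δ.toLinearMap : Module.End K A) := by
  haveI : Fact p.Prime := ⟨hp⟩
  have hp2 := hp.two_le
  rw [expand δ a p]
  have hmain : ∑ i ∈ Finset.range (p+1),
      hcoef δ a p i • (δ.toLinearMap ^ i : Module.End K A)
      = hcoef δ a p 1 • (δ.toLinearMap ^ 1 : Module.End K A) := by
    refine Finset.sum_eq_single_of_mem 1 (Finset.mem_range.mpr (by omega)) ?_
    intro c hc hc1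
    rw [Finset.mem_range] at hc
    rcases Nat.eq_zero_or_pos c with h0 | h0
    · subst h0
      rw [hcoef_nzero δ a p (by omega), zero_smul]
    · rcases eq_or_ne c p with hcp | hcp
      · subst hcp
        rw [hδ, smul_zero]
      · have h2c : 2 ≤ c := by omega
        have hclt : c < p := by omega
        have := transferHom_hcoef p δ a p c
        rw [hcoef_middle_zero p c h2c hclt, map_zero] at this
        rw [← this, zero_smul]
  rw [hmain, pow_one]
  congr 1
  conv_lhs => rw [show p = p - 1 + 1 by omega]
  rw [hcoef_one]
end

section
/- Let A be a commutative K-algebra and δ = (1, δ_1, δ_2, …) a higher derivation (Hasse–Schmidt derivation) over K from A to A. Then for all natural numbers i, k ≥ 0 and x ∈ A in characteristic p > 0: δ_{k·p^i}(x^{p^i}) = (δ_k(x))^{p^i}, and δ_j(x^{p^i}) = 0 whenever p^i does not divide j. -/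
/-!
Encode `δ` and `x` as the power series `e x = ∑ δ_m(x) tᵐ`. The Leibniz rule says exactly that
`e (x y) = e x * e y`, so `e (x ^ q) = (e x) ^ q`. With `q = p ^ i`, raising a power series to
the power `q` in characteristic `p` raises each coefficient to the power `q` and substitutes
`t ↦ t ^ q`: the coefficient of `t ^ (k q)` becomes `(δ_k x) ^ q` and all others vanish.
-/

open PowerSeries

theorem PowerSeries.coeff_pow_expChar_pow {R : Type*} [CommRing R] (p : ℕ) [ExpChar R p]
    (f : R⟦X⟧) (n j : ℕ) :
    coeff j (f ^ p ^ n) = if p ^ n ∣ j then coeff (j / p ^ n) f ^ p ^ n else 0 := by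
  have hq : p ^ n ≠ 0 := pow_ne_zero n (expChar_ne_zero R p)
  rw [← MvPowerSeries.map_iterateFrobenius_expand p (expChar_ne_zero R p)]
  -- `PowerSeries.map` and `PowerSeries.expand` are the `MvPowerSeries` ones over `Unit`
  change coeff j (map (iterateFrobenius R p n) (expand (p ^ n) hq f)) = _
  rw [coeff_map, coeff_expand]
  split_ifs
  · exact iterateFrobenius_def ..
  · exact zero_pow hq

section HasseSchmidt

open Finset.HasAntidiagonal

variable {A : Type*} [CommRing A] (δ : ℕ → A → A)

theorem mk_apply_mul
    (hleib : ∀ (k : ℕ) (x y : A), δ k (x * y) = ∑ ij ∈ antidiagonal k, δ ij.1 x * δ ij.2 y)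
    (x y : A) :
    mk (fun m ↦ δ m (x * y)) = mk (fun m ↦ δ m x) * mk (fun m ↦ δ m y) := by
  ext k
  simp only [coeff_mk, coeff_mul, hleib]

theorem mk_apply_pow
    (hleib : ∀ (k : ℕ) (x y : A), δ k (x * y) = ∑ ij ∈ antidiagonal k, δ ij.1 x * δ ij.2 y)
    (x : A) {n : ℕ} (hn : n ≠ 0) :
    mk (fun m ↦ δ m (x ^ n)) = mk (fun m ↦ δ m x) ^ n := by
  induction n with
  | zero => exact absurd rfl hn
  | succ n ih =>
    rcases eq_or_ne n 0 with rfl | hn'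
    · simp
    · rw [pow_succ, mk_apply_mul δ hleib, ih hn', pow_succ]

theorem apply_pow_expChar_pow
    (hleib : ∀ (k : ℕ) (x y : A), δ k (x * y) = ∑ ij ∈ antidiagonal k, δ ij.1 x * δ ij.2 y)
    (p : ℕ) [ExpChar A p] (n j : ℕ) (x : A) :
    δ j (x ^ p ^ n) = if p ^ n ∣ j then δ (j / p ^ n) x ^ p ^ n else 0 := by
  have h := congrArg (coeff j) (mk_apply_pow δ hleib x (pow_ne_zero n (expChar_ne_zero A p)))
  rwa [coeff_mk, coeff_pow_expChar_pow, coeff_mk] at h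

end HasseSchmidt

theorem higher_derivation_frobenius_general (K A : Type*) [Field K] [CommRing A] [Algebra K A]
    (p : ℕ) (hp : p.Prime) [CharP K p]
    (δ : ℕ → A →ₗ[K] A)
    (hleib : ∀ (k : ℕ) (x y : A),
      δ k (x * y) = ∑ ij ∈ Finset.HasAntidiagonal.antidiagonal k, δ ij.1 x * δ ij.2 y) :
    ∀ (i k : ℕ) (x : A),
      δ (k * p ^ i) (x ^ p ^ i) = (δ k x) ^ p ^ i ∧
      ∀ j : ℕ, ¬ (p ^ i ∣ j) → δ j (x ^ p ^ i) = 0 := by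
  intro i k x
  rcases subsingleton_or_nontrivial A with hA | hA
  · exact ⟨Subsingleton.elim _ _, fun _ _ ↦ Subsingleton.elim _ _⟩
  have : CharP A p := charP_of_injective_algebraMap (algebraMap K A).injective p
  have : ExpChar A p := ExpChar.prime hp
  have key := apply_pow_expChar_pow (fun m ↦ δ m) hleib p i
  refine ⟨?_, fun j hj ↦ by rw [key, if_neg hj]⟩
  rw [key, if_pos (dvd_mul_left _ _), Nat.mul_div_cancel _ (pow_pos hp.pos i)]

/-- Let `K` be a field of characteristic `p > 0`, `A` a commutative `K`-algebra and
`δ = (id, δ_1, δ_2, …)` a higher (Hasse–Schmidt) derivation of `A` over `K`.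
Then for all `i, k ≥ 0` and `x ∈ A`, `δ_{k·p^i}(x^{p^i}) = (δ_k x)^{p^i}`, and
`δ_j(x^{p^i}) = 0` whenever `p^i` does not divide `j`. -/
theorem higher_derivation_frobenius (K A : Type*) [Field K] [CommRing A] [Algebra K A]
    (p : ℕ) (hp : p.Prime) [CharP K p]
    (δ : ℕ → A →ₗ[K] A) (h0 : δ 0 = LinearMap.id)
    (hleib : ∀ (k : ℕ) (x y : A),
      δ k (x * y) = ∑ ij ∈ Finset.HasAntidiagonal.antidiagonal k, δ ij.1 x * δ ij.2 y) :
    ∀ (i k : ℕ) (x : A),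
      δ (k * p ^ i) (x ^ p ^ i) = (δ k x) ^ p ^ i ∧
      ∀ j : ℕ, ¬ (p ^ i ∣ j) → δ j (x ^ p ^ i) = 0 :=
  higher_derivation_frobenius_general K A p hp δ hleib
end

section
/- Let A be a K-algebra with a finite-dimensional filtration F = {A_i}_{i≥0} (A_0 ⊇ K, A_i A_j ⊆ A_{i+j}, ∪A_i = A, dim_K A_i < ∞) such that A is a simple ring. Suppose the 'left unit return function' λ(i) := min { j : for every nonzero a ∈ A_i, the left ideal A·a·A_j contains a unit of A } takes finite values. Let M be a nonzero A-module generated by a finite-dimensional subspace M_0, with filtration M_i = A_i M_0. Then for every i ≥ 0, dim_K(A_i) ≤ dim_K(M_{λ(i)}) · dim_K(M_{λ(i)+i}). -/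
/-- Let `A` be a simple `K`-algebra with a finite-dimensional filtration
`F = {A_i}` (`1 ∈ A_0`, `A_i ⊆ A_{i+1}`, `A_i·A_j ⊆ A_{i+j}`, `∪ A_i = A`,
`dim_K A_i < ∞`). Suppose the left unit return function `λ` satisfies: for every
`i` and every nonzero `a ∈ A_i`, the left ideal `A·a·A_{λ(i)}` contains a unit of
`A`. Let `M` be a nonzero `A`-module generated by a finite-dimensional subspace
`M_0`, filtered by `M_i = A_i·M_0`. Then for all `i`,
`dim_K A_i ≤ dim_K M_{λ(i)} · dim_K M_{λ(i)+i}`. -/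
theorem filtered_simple_algebra_dim_ineq
    (K A M : Type*) [Field K] [Ring A] [Algebra K A] [IsSimpleRing A]
    [AddCommGroup M] [Module K M] [Module A M] [IsScalarTower K A M]
    (F : ℕ → Submodule K A) (hmono : Monotone F) (hone : (1 : A) ∈ F 0)
    (hmul : ∀ i j : ℕ, ∀ a ∈ F i, ∀ b ∈ F j, a * b ∈ F (i + j))
    (hunion : ∀ a : A, ∃ i, a ∈ F i)
    (hfin : ∀ i, FiniteDimensional K (F i))
    (lam : ℕ → ℕ)
    (hlam : ∀ i : ℕ, ∀ a ∈ F i, a ≠ 0 →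
      ∃ u : Aˣ, (u : A) ∈ Submodule.span A {x : A | ∃ y ∈ F (lam i), x = a * y})
    (M0 : Submodule K M) [FiniteDimensional K M0]
    (hgen : Submodule.span A (M0 : Set M) = ⊤) (hM : Nontrivial M)
    (Mfil : ℕ → Submodule K M)
    (hMfil : ∀ i, Mfil i = Submodule.span K {x : M | ∃ a ∈ F i, ∃ m ∈ M0, x = a • m}) :
    ∀ i : ℕ, Module.finrank K (F i) ≤
      Module.finrank K (Mfil (lam i)) * Module.finrank K (Mfil (lam i + i)) := by
  intro i
  haveI := hfin i
  -- each Mfil j is finite dimensional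
  have hMfin : ∀ j, FiniteDimensional K (Mfil j) := by
    intro j
    haveI := hfin j
    -- bilinear map (F j) × M0 → M
    let B : (F j) →ₗ[K] (M0 : Submodule K M) →ₗ[K] M :=
      { toFun := fun a =>
          { toFun := fun m => (a : A) • (m : M)
            map_add' := by intro x y; simp [smul_add]
            map_smul' := by
              intro c x; simp only [SetLike.val_smul, RingHom.id_apply]; rw [smul_comm] }
        map_add' := by intro x y; ext m; simp [add_smul]
        map_smul' := by intro c x; ext m; simp [smul_assoc] }
    let f := TensorProduct.lift B
    have hle : Mfil j ≤ LinearMap.range f := by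
      rw [hMfil j, Submodule.span_le]
      rintro x ⟨a, ha, m, hm, rfl⟩
      exact ⟨(⟨a, ha⟩ : F j) ⊗ₜ[K] (⟨m, hm⟩ : M0), rfl⟩
    exact Submodule.finiteDimensional_of_le hle
  haveI := hMfin (lam i)
  haveI := hMfin (lam i + i)
  -- multiplication sends Mfil (lam i) into Mfil (lam i + i)
  have hmem : ∀ a ∈ F i, ∀ m ∈ Mfil (lam i), a • m ∈ Mfil (lam i + i) := by
    intro a ha m hm
    rw [hMfil (lam i)] at hm
    rw [hMfil (lam i + i)]
    induction hm using Submodule.span_induction with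
    | mem x hx =>
      obtain ⟨y, hy, m0, hm0, rfl⟩ := hx
      refine Submodule.subset_span ⟨a * y, ?_, m0, hm0, (mul_smul a y m0).symm⟩
      rw [Nat.add_comm (lam i) i]
      exact hmul i (lam i) a ha y hy
    | zero => simp
    | add x y _ _ hx hy => rw [smul_add]; exact Submodule.add_mem _ hx hy
    | smul c x _ hx => rw [smul_comm]; exact Submodule.smul_mem _ c hx
  -- the K-linear map F i → Hom(Mfil (lam i), Mfil (lam i + i))
  let φ : (F i) →ₗ[K] ((Mfil (lam i)) →ₗ[K] (Mfil (lam i + i))) :=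
    { toFun := fun a =>
        { toFun := fun m => ⟨(a : A) • (m : M), hmem a a.2 m m.2⟩
          map_add' := by intro x y; apply Subtype.ext; simp [smul_add]
          map_smul' := by
            intro c x; apply Subtype.ext
            simp only [SetLike.val_smul, RingHom.id_apply]; rw [smul_comm] }
      map_add' := by intro x y; ext m; simp [add_smul]
      map_smul' := by intro c x; ext m; simp [smul_assoc] }
  have hinj : Function.Injective φ := by
    rw [injective_iff_map_eq_zero]
    intro a haz
    by_contra hne
    have hane : (a : A) ≠ 0 := fun h => hne (Subtype.ext h)
    obtain ⟨u, hu⟩ := hlam i a a.2 hane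
    -- a • m = 0 for all m ∈ Mfil (lam i)
    have hkill : ∀ m ∈ Mfil (lam i), (a : A) • m = 0 := by
      intro m hm
      have := congrArg (fun g => ((g ⟨m, hm⟩ : Mfil (lam i + i)) : M)) haz
      simpa [φ] using this
    -- hence u • m0 = 0 for all m0 ∈ M0
    have hu0 : ∀ m0 ∈ M0, (u : A) • m0 = 0 := by
      intro m0 hm0
      have : ∀ x ∈ Submodule.span A {x : A | ∃ y ∈ F (lam i), x = (a : A) * y},
          x • m0 = 0 := by
        intro x hx
        induction hx using Submodule.span_induction with
        | mem x hx =>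
          obtain ⟨y, hy, rfl⟩ := hx
          rw [mul_smul]
          apply hkill
          rw [hMfil (lam i)]
          exact Submodule.subset_span ⟨y, hy, m0, hm0, rfl⟩
        | zero => simp
        | add x y _ _ hx hy => rw [add_smul, hx, hy, add_zero]
        | smul c x _ hx => rw [smul_assoc, hx, smul_zero]
      exact this _ hu
    -- so M0 = 0, contradicting hgen + nontrivial M
    have hM0 : ∀ m0 ∈ M0, m0 = 0 := by
      intro m0 hm0
      have : m0 = ((u⁻¹ : Aˣ) : A) • ((u : A) • m0) := by
        rw [← mul_smul, Units.inv_mul, one_smul]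
      rw [this, hu0 m0 hm0, smul_zero]
    obtain ⟨x, y, hxy⟩ := hM
    have : (⊤ : Submodule A M) ≤ ⊥ := by
      rw [← hgen, Submodule.span_le]
      intro m hm
      simp [hM0 m hm]
    exact hxy (by
      have hx := this (Submodule.mem_top (x := x))
      have hy := this (Submodule.mem_top (x := y))
      simp only [Submodule.mem_bot] at hx hy
      rw [hx, hy])
  calc Module.finrank K (F i)
      ≤ Module.finrank K ((Mfil (lam i)) →ₗ[K] (Mfil (lam i + i))) :=
        LinearMap.finrank_le_finrank_of_injective hinj
    _ = Module.finrank K (Mfil (lam i)) * Module.finrank K (Mfil (lam i + i)) :=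
        Module.finrank_linearMap _ _ _ _
end

section
/- Let K be a field of characteristic p > 0 and Λ = K[∂^{[1]}, ∂^{[2]}, …] the subalgebra of D(K[x]) generated by all divided power operators ∂^{[j]}, j ≥ 1. Then every element of the augmentation ideal Λ_+ = ⊕_{j≥1} K∂^{[j]} is nilpotent, and Λ/Λ_+ ≅ K; hence K is, up to isomorphism, the only simple Λ-module. -/
set_option synthInstance.maxHeartbeats 1000000
set_option maxHeartbeats 1000000

universe u v

/-- The augmentation ideal `Λ_+ = ⊕_{j≥1} K·∂^{[j]}` of the algebra
`Λ = K[∂^{[1]}, ∂^{[2]}, …]` of divided power (Hasse derivative) operators,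
viewed as a `K`-subspace of `End_K(K[x])`. -/
noncomputable def lambdaPlus (K : Type u) [Field K] :
    Submodule K (Module.End K (Polynomial K)) :=
  Submodule.span K
    {f | ∃ j : ℕ, 1 ≤ j ∧ f = (Polynomial.hasseDeriv j : Module.End K (Polynomial K))}

/-- The subalgebra `Λ = K[∂^{[1]}, ∂^{[2]}, …]` of `D(K[x]) ⊆ End_K(K[x])`
generated by the divided power operators `∂^{[j]}`, `j ≥ 1`. -/
noncomputable def lambdaAlg (K : Type u) [Field K] :
    Subalgebra K (Module.End K (Polynomial K)) :=
  Algebra.adjoin K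
    {f | ∃ j : ℕ, 1 ≤ j ∧ f = (Polynomial.hasseDeriv j : Module.End K (Polynomial K))}

/-!
Since `∂^{[k]} ∂^{[l]} = C(k+l, k) ∂^{[k+l]}`, the generators commute, so `Λ` is commutative, and
`(∂^{[i]})^p` is a multiple of `C(p i, i) = p · C(p i - 1, i - 1)`, hence zero in characteristic
`p`; thus `Λ_+` consists of nilpotent elements. The same product formula makes `K·1 + Λ_+` a
subalgebra, so `Λ = K·1 ⊕ Λ_+`, and the augmentation `φ` is the character by which `Λ` acts on
the constants of `K[x]`. By Schur's lemma a central nilpotent element acts by zero on a simple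
module; so the annihilator of any nonzero vector of a simple module is `ker φ`, and every simple
module is isomorphic to `Λ ⧸ ker φ`.
-/

theorem Nat.dvd_choose_mul (n : ℕ) {i : ℕ} (hi : 0 < i) : n ∣ (n * i).choose i := by
  obtain ⟨k, rfl⟩ := Nat.exists_eq_add_one_of_ne_zero hi.ne'
  rcases n.eq_zero_or_pos with rfl | hn
  · simp
  obtain ⟨m, hm⟩ := Nat.exists_eq_add_one_of_ne_zero (Nat.mul_ne_zero hn.ne' k.succ_ne_zero)
  have key := Nat.add_one_mul_choose_eq m k
  rw [← hm] at key
  exact ⟨m.choose k, Nat.eq_of_mul_eq_mul_right k.succ_pos (by rw [← key]; ring)⟩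

namespace Polynomial

variable {R : Type*} [CommSemiring R]

theorem hasseDeriv_mul_hasseDeriv (k l : ℕ) :
    (hasseDeriv k : Module.End R R[X]) * hasseDeriv l = (k + l).choose k • hasseDeriv (k + l) :=
  hasseDeriv_comp k l

theorem hasseDeriv_commute (k l : ℕ) :
    Commute (hasseDeriv k : Module.End R R[X]) (hasseDeriv l) := by
  rw [Commute, SemiconjBy, hasseDeriv_mul_hasseDeriv, hasseDeriv_mul_hasseDeriv, add_comm l k,
    Nat.choose_symm_add]

theorem exists_hasseDeriv_pow (i n : ℕ) :
    ∃ c : ℕ, (hasseDeriv i : Module.End R R[X]) ^ n = c • hasseDeriv (n * i) := by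
  induction n with
  | zero => exact ⟨1, by simp [hasseDeriv_zero, Module.End.one_eq_id]⟩
  | succ n ih =>
    obtain ⟨c, hc⟩ := ih
    refine ⟨c * (n * i + i).choose (n * i), ?_⟩
    rw [pow_succ, hc, smul_mul_assoc, hasseDeriv_mul_hasseDeriv, smul_smul, add_one_mul]

/-- `(∂^{[i]})^p` is a multiple of `C(p i, i)`, which `p` divides. -/
theorem hasseDeriv_pow_char (p : ℕ) [CharP R p] (hp : p ≠ 0) {i : ℕ} (hi : 0 < i) :
    (hasseDeriv i : Module.End R R[X]) ^ p = 0 := by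
  obtain ⟨n, rfl⟩ := Nat.exists_eq_add_one_of_ne_zero hp
  obtain ⟨c, hc⟩ := exists_hasseDeriv_pow (R := R) i n
  have hchoose : ((n * i + i).choose (n * i) : R) = 0 := by
    rw [CharP.cast_eq_zero_iff R (n + 1), Nat.choose_symm_add, ← add_one_mul]
    exact Nat.dvd_choose_mul (n + 1) hi
  rw [pow_succ, hc, smul_mul_assoc, hasseDeriv_mul_hasseDeriv,
    ← Nat.cast_smul_eq_nsmul R ((n * i + i).choose (n * i)), hchoose, zero_smul, smul_zero]

end Polynomial

namespace IsSimpleModule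

variable {A M N : Type*} [Ring A] [AddCommGroup M] [Module A M] [AddCommGroup N] [Module A N]

theorem smul_eq_zero_of_isNilpotent [IsSimpleModule A M] {x : A} (hx : IsNilpotent x)
    (hcomm : ∀ a : A, Commute x a) (m : M) : x • m = 0 := by
  let f : Module.End A M :=
    { toFun := (x • ·)
      map_add' := smul_add x
      map_smul' := fun a m => by simp only [smul_smul, (hcomm a).eq, RingHom.id_apply] }
  rcases LinearMap.bijective_or_eq_zero f with hf | hf
  · obtain ⟨n, hn⟩ := hx
    have hinj : Function.Injective (x ^ n • · : M → M) := by
      rw [← smul_iterate]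
      exact hf.injective.iterate n
    have : Subsingleton M := ⟨fun a b => hinj (by simp only [hn, zero_smul])⟩
    exact absurd this (not_subsingleton_iff_nontrivial.mpr (IsSimpleModule.nontrivial A M))
  · exact LinearMap.congr_fun hf m

theorem nonempty_linearEquiv_of_ker_toSpanSingleton_eq [IsSimpleModule A M]
    [IsSimpleModule A N] {m : M} {n : N} (hm : m ≠ 0) (hn : n ≠ 0)
    (h : LinearMap.ker (LinearMap.toSpanSingleton A M m) =
      LinearMap.ker (LinearMap.toSpanSingleton A N n)) :
    Nonempty (M ≃ₗ[A] N) :=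
  ⟨((LinearMap.quotKerEquivOfSurjective _ (toSpanSingleton_surjective A hm)).symm.trans
    (Submodule.quotEquivOfEq _ _ h)).trans
      (LinearMap.quotKerEquivOfSurjective _ (toSpanSingleton_surjective A hn))⟩

end IsSimpleModule

section Augmentation

variable {K A M N : Type*} [Field K] [Ring A] [Algebra K A] [IsMulCommutative A]
  [AddCommGroup M] [Module A M] [IsSimpleModule A M] [AddCommGroup N] [Module A N]
  [IsSimpleModule A N]

theorem IsSimpleModule.smul_eq_zero_of_map_eq_zero (φ : A →ₐ[K] K)
    (hφ : ∀ a, φ a = 0 → IsNilpotent a) {a : A} (ha : φ a = 0) (m : M) :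
    a • m = 0 :=
  smul_eq_zero_of_isNilpotent (hφ a ha) (mul_comm' a) m

theorem IsSimpleModule.ker_toSpanSingleton_eq_ker (φ : A →ₐ[K] K)
    (hφ : ∀ a, φ a = 0 → IsNilpotent a) {m : M} (hm : m ≠ 0) :
    LinearMap.ker (LinearMap.toSpanSingleton A M m) = RingHom.ker φ := by
  ext a
  rw [LinearMap.mem_ker, LinearMap.toSpanSingleton_apply]
  refine ⟨fun ha => ?_, fun ha => smul_eq_zero_of_map_eq_zero φ hφ (RingHom.mem_ker.mp ha) m⟩
  have hsub : (a - algebraMap K A (φ a)) • m = 0 :=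
    smul_eq_zero_of_map_eq_zero φ hφ (by simp) m
  rw [sub_smul, ha, zero_sub, neg_eq_zero] at hsub
  by_contra hφa
  exact hm ((((Ne.isUnit hφa).map (algebraMap K A)).smul_eq_zero).mp hsub)

theorem IsSimpleModule.nonempty_linearEquiv_of_ker_isNilpotent (φ : A →ₐ[K] K)
    (hφ : ∀ a, φ a = 0 → IsNilpotent a) : Nonempty (M ≃ₗ[A] N) := by
  have := IsSimpleModule.nontrivial A M
  have := IsSimpleModule.nontrivial A N
  obtain ⟨m, hm⟩ := exists_ne (0 : M)
  obtain ⟨n, hn⟩ := exists_ne (0 : N)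
  refine nonempty_linearEquiv_of_ker_toSpanSingleton_eq hm hn ?_
  rw [ker_toSpanSingleton_eq_ker φ hφ hm, ker_toSpanSingleton_eq_ker φ hφ hn]

end Augmentation

open Polynomial

variable {K : Type u} [Field K]

theorem hasseDeriv_mem_lambdaPlus {j : ℕ} (hj : 1 ≤ j) :
    (hasseDeriv j : Module.End K K[X]) ∈ lambdaPlus K :=
  Submodule.subset_span ⟨j, hj, rfl⟩

theorem lambdaPlus_mul_le : lambdaPlus K * lambdaPlus K ≤ lambdaPlus K := by
  rw [lambdaPlus, Submodule.span_mul_span, Submodule.span_le]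
  rintro _ ⟨_, ⟨k, hk, rfl⟩, _, ⟨l, hl, rfl⟩, rfl⟩
  dsimp only
  rw [hasseDeriv_mul_hasseDeriv]
  exact nsmul_mem (hasseDeriv_mem_lambdaPlus (by omega)) _

theorem lambdaPlus_le_lambdaAlg : lambdaPlus K ≤ Subalgebra.toSubmodule (lambdaAlg K) :=
  Submodule.span_le.mpr Algebra.subset_adjoin

theorem lambdaAlg_le_one_sup_lambdaPlus :
    Subalgebra.toSubmodule (lambdaAlg K) ≤ 1 ⊔ lambdaPlus K := by
  have hmul : (1 ⊔ lambdaPlus K) * (1 ⊔ lambdaPlus K) ≤ 1 ⊔ lambdaPlus K := by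
    rw [Submodule.mul_sup, Submodule.sup_mul, Submodule.sup_mul, Submodule.one_mul,
      Submodule.mul_one, Submodule.one_mul]
    exact sup_le le_rfl (sup_le le_sup_right (lambdaPlus_mul_le.trans le_sup_right))
  let S := (1 ⊔ lambdaPlus K).toSubalgebra
    (Submodule.mem_sup_left (Submodule.mem_one.mpr ⟨1, map_one _⟩))
    (fun _ _ hx hy => hmul (Submodule.mul_mem_mul hx hy))
  exact Algebra.adjoin_le (S := S) fun _ hf => Submodule.mem_sup_right (Submodule.subset_span hf)

theorem exists_sub_algebraMap_mem_lambdaPlus {x : Module.End K K[X]} (hx : x ∈ lambdaAlg K) :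
    ∃ c : K, x - algebraMap K _ c ∈ lambdaPlus K := by
  obtain ⟨_, h1, y, hy, rfl⟩ := Submodule.mem_sup.mp (lambdaAlg_le_one_sup_lambdaPlus hx)
  obtain ⟨c, rfl⟩ := Submodule.mem_one.mp h1
  exact ⟨c, by simpa using hy⟩

instance : IsMulCommutative (lambdaAlg K) :=
  Algebra.isMulCommutative_adjoin K <| by
    rintro _ ⟨k, -, rfl⟩ _ ⟨l, -, rfl⟩
    exact hasseDeriv_commute k l

theorem isNilpotent_of_mem_lambdaPlus (p : ℕ) [CharP K p] (hp : p ≠ 0)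
    {x : Module.End K K[X]} (hx : x ∈ lambdaPlus K) : IsNilpotent x := by
  induction hx using Submodule.span_induction with
  | mem f hf =>
    obtain ⟨j, hj, rfl⟩ := hf
    exact ⟨p, hasseDeriv_pow_char p hp hj⟩
  | zero => exact .zero
  | add a b ha hb hna hnb =>
    have hab := congrArg Subtype.val
      (mul_comm' (⟨a, lambdaPlus_le_lambdaAlg ha⟩ : lambdaAlg K) ⟨b, lambdaPlus_le_lambdaAlg hb⟩)
    exact Commute.isNilpotent_add hab hna hnb
  | smul c a _ hna => exact hna.smul c

theorem lambdaPlus_apply_one {x : Module.End K K[X]} (hx : x ∈ lambdaPlus K) : x 1 = 0 := by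
  refine (Submodule.span_le (p := LinearMap.ker (LinearMap.applyₗ 1))).mpr ?_ hx
  rintro _ ⟨j, hj, rfl⟩
  exact hasseDeriv_apply_one j hj

theorem apply_one_eq_C_of_sub_mem_lambdaPlus {x : Module.End K K[X]} {c : K}
    (h : x - algebraMap K _ c ∈ lambdaPlus K) : x 1 = C c := by
  have := lambdaPlus_apply_one h
  rwa [LinearMap.sub_apply, Module.algebraMap_end_apply, sub_eq_zero, ← C_mul', mul_one] at this

theorem lambdaAlg_apply_one (a : lambdaAlg K) :
    (a : Module.End K K[X]) 1 = C (((a : Module.End K K[X]) 1).coeff 0) := by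
  obtain ⟨c, hc⟩ := exists_sub_algebraMap_mem_lambdaPlus a.2
  rw [apply_one_eq_C_of_sub_mem_lambdaPlus hc, coeff_C_zero]

noncomputable def lambdaAugmentation (K : Type u) [Field K] : lambdaAlg K →ₐ[K] K where
  toFun a := ((a : Module.End K K[X]) 1).coeff 0
  map_one' := by simp
  map_mul' a b := by
    change ((a : Module.End K K[X]) ((b : Module.End K K[X]) 1)).coeff 0 = _
    rw [lambdaAlg_apply_one b, coeff_C_zero, ← mul_one (C _), C_mul', map_smul, coeff_smul,
      smul_eq_mul, mul_comm]
  map_zero' := by simp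
  map_add' a b := by simp
  commutes' r := by simp

theorem lambdaAugmentation_eq_zero_iff (x : lambdaAlg K) :
    lambdaAugmentation K x = 0 ↔ (x : Module.End K K[X]) ∈ lambdaPlus K := by
  obtain ⟨c, hc⟩ := exists_sub_algebraMap_mem_lambdaPlus x.2
  have hx : lambdaAugmentation K x = c := by
    change ((x : Module.End K K[X]) 1).coeff 0 = c
    rw [apply_one_eq_C_of_sub_mem_lambdaPlus hc, coeff_C_zero]
  rw [hx]
  refine ⟨by rintro rfl; simpa using hc, fun hmem => ?_⟩
  have := apply_one_eq_C_of_sub_mem_lambdaPlus hc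
  rwa [lambdaPlus_apply_one hmem, eq_comm, C_eq_zero] at this

/-- Over a field `K` of characteristic `p > 0`: every element of the augmentation
ideal `Λ_+` is nilpotent; there is a `K`-algebra map `φ : Λ → K` whose kernel is
exactly `Λ_+` (so `Λ/Λ_+ ≅ K`); and hence `K ≅ Λ/Λ_+` is, up to isomorphism, the
only simple `Λ`-module: every simple `Λ`-module is annihilated by `Λ_+` (hence is
a simple module over `Λ/Λ_+ ≅ K`, i.e. a copy of `K`), and any two simple
`Λ`-modules are isomorphic. -/
theorem lambda_augmentation (K : Type u) [Field K] (p : ℕ) (hp : p.Prime) [CharP K p] :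
    (∀ x ∈ lambdaPlus K, IsNilpotent x) ∧
    (∃ φ : (lambdaAlg K) →ₐ[K] K,
      ∀ x : lambdaAlg K, φ x = 0 ↔ (x : Module.End K (Polynomial K)) ∈ lambdaPlus K) ∧
    (∀ (M : Type v) [AddCommGroup M] [Module (lambdaAlg K) M],
      IsSimpleModule (lambdaAlg K) M →
        ∀ x : lambdaAlg K, (x : Module.End K (Polynomial K)) ∈ lambdaPlus K →
          ∀ m : M, x • m = 0) ∧
    (∀ (M N : Type v) [AddCommGroup M] [Module (lambdaAlg K) M]
      [AddCommGroup N] [Module (lambdaAlg K) N],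
      IsSimpleModule (lambdaAlg K) M → IsSimpleModule (lambdaAlg K) N →
        Nonempty (M ≃ₗ[lambdaAlg K] N)) := by
  have hnil : ∀ x ∈ lambdaPlus K, IsNilpotent x :=
    fun _ hx => isNilpotent_of_mem_lambdaPlus p hp.ne_zero hx
  have hker : ∀ a, lambdaAugmentation K a = 0 → IsNilpotent a := fun a ha =>
    (IsNilpotent.map_iff (f := (lambdaAlg K).val) Subtype.val_injective).mp
      (hnil _ ((lambdaAugmentation_eq_zero_iff a).mp ha))
  refine ⟨hnil, ⟨lambdaAugmentation K, fun x => lambdaAugmentation_eq_zero_iff x⟩, ?_, ?_⟩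
  · intro M _ _ _ x hx m
    exact IsSimpleModule.smul_eq_zero_of_map_eq_zero (A := lambdaAlg K) (lambdaAugmentation K)
      hker ((lambdaAugmentation_eq_zero_iff x).mpr hx) m
  · intro M N _ _ _ _ _ _
    exact IsSimpleModule.nonempty_linearEquiv_of_ker_isNilpotent (A := lambdaAlg K)
      (lambdaAugmentation K) hker
end
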